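/- arXiv:0801.1976 — 2 statements merged into one kernel-verified Lean document; each statement's English description precedes it below -/
import Mathlib

section
/- For every integer s ≥ 1 and all n ≥ 1, k ≥ 0, a multiset P of positive integer block sizes, and m ≥ 0, F(n,k,P,m) = Σ_{i=0}^{s} (-1)^i · C(s,i) · F(n, k+s, P, m+s-i). -/
/-!
Splitting an `(n+k)`-subset of the ground set into its part `A` in the main blocks and its part
`B` in the extra block, `F n p m k` becomes a sum over the sets `A` meeting every main block of
the number of sets `B` of size `n + k - #A`, a binomial coefficient in `m`. Pascal's rule then
gives `F (m+1) (k+1) = F m (k+1) + F m k`, i.e. `m ↦ F m k` is the forward difference of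
`m ↦ F m (k+1)`. Hence `m ↦ F m k` is the `s`-th forward difference of `m ↦ F m (k+s)`, and
expanding that difference binomially is the claimed alternating sum.
-/

/-- The ground set: `n` main blocks, the `i`-th of size `p i`, plus an
additional block of size `m`. -/
abbrev InsetGround (n : ℕ) (p : Fin n → ℕ) (m : ℕ) : Type :=
  (Σ i : Fin n, Fin (p i)) ⊕ Fin m

/-- `F n p m k` is the number of `(n+k)`-subsets of the ground set that
intersect every main block (the "(n+k)-insets"). -/
def F (n : ℕ) (p : Fin n → ℕ) (m k : ℕ) : ℕ :=
  ((Finset.univ : Finset (Finset (InsetGround n p m))).filter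
    (fun U => U.card = n + k ∧
      ∀ i : Fin n, ∃ x : Σ j : Fin n, Fin (p j), x.1 = i ∧ Sum.inl x ∈ U)).card

open Finset

def MeetsEveryBlock {n : ℕ} {p : Fin n → ℕ} (A : Finset (Σ i : Fin n, Fin (p i))) : Prop :=
  ∀ i : Fin n, ∃ x : Σ j : Fin n, Fin (p j), x.1 = i ∧ x ∈ A

instance {n : ℕ} {p : Fin n → ℕ} : DecidablePred (MeetsEveryBlock (p := p)) :=
  fun _ => by unfold MeetsEveryBlock; infer_instance

lemma F_eq_sum_card (n : ℕ) (p : Fin n → ℕ) (m k : ℕ) :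
    F n p m k = ∑ A : Finset (Σ i : Fin n, Fin (p i)) with MeetsEveryBlock A,
      #{B : Finset (Fin m) | #A + #B = n + k} := by
  rw [F, card_equiv Finset.sumEquiv.toEquiv
    (t := {AB : Finset (Σ i : Fin n, Fin (p i)) × Finset (Fin m) |
      MeetsEveryBlock AB.1 ∧ #AB.1 + #AB.2 = n + k}) ?_]
  · simp only [card_filter, Fintype.sum_prod_type, sum_filter, ite_and, sum_ite_irrel,
      sum_const_zero]
  · intro U
    simp [MeetsEveryBlock, card_toLeft_add_card_toRight, and_comm]

lemma card_filter_add_card_eq (β : Type*) [Fintype β] (a r : ℕ) :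
    #{B : Finset β | a + #B = r} = if a ≤ r then (Fintype.card β).choose (r - a) else 0 := by
  split_ifs with h
  · have : ({B | a + #B = r} : Finset (Finset β)) = powersetCard (r - a) univ := by
      ext B
      rw [mem_powersetCard_univ, mem_filter_univ]
      omega
    rw [this, card_powersetCard, card_univ]
  · rw [filter_false_of_mem fun B _ => by omega, card_empty]

lemma card_filter_add_card_eq_succ (m a r : ℕ) :
    #{B : Finset (Fin (m + 1)) | a + #B = r + 1} =
      #{B : Finset (Fin m) | a + #B = r + 1} + #{B : Finset (Fin m) | a + #B = r} := by
  simp only [card_filter_add_card_eq, Fintype.card_fin]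
  rcases Nat.lt_or_ge r a with h | h
  · rcases Nat.succ_le_of_lt h |>.eq_or_lt with rfl | h'
    · simp
    · simp [h.not_ge, h'.not_ge]
  · rw [if_pos (by omega), if_pos (by omega), if_pos h, Nat.sub_add_comm h,
      Nat.choose_succ_succ', add_comm]

lemma F_succ_succ (n : ℕ) (p : Fin n → ℕ) (m k : ℕ) :
    F n p (m + 1) (k + 1) = F n p m (k + 1) + F n p m k := by
  simp only [F_eq_sum_card, ← add_assoc, card_filter_add_card_eq_succ, sum_add_distrib]

section Pascal

variable {G : Type*} [AddCommGroup G] {f : ℕ → ℕ → G}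

open fwdDiff

lemma eq_fwdDiff_iter_of_pascal (hf : ∀ m k, f (m + 1) (k + 1) = f m (k + 1) + f m k)
    (s m k : ℕ) : f m k = (Δ_[1])^[s] (fun t => f t (k + s)) m := by
  induction s generalizing m with
  | zero => rfl
  | succ s ih =>
    have hΔ : (fun t => f t (k + s)) = Δ_[1] (fun t => f t (k + s + 1)) := by
      funext t
      rw [fwdDiff, hf, add_sub_cancel_left]
    rw [ih, hΔ, ← Function.iterate_succ_apply]
    rfl

lemma eq_alternating_sum_of_pascal (hf : ∀ m k, f (m + 1) (k + 1) = f m (k + 1) + f m k)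
    (s m k : ℕ) :
    f m k = ∑ i ∈ range (s + 1), ((-1 : ℤ) ^ i * s.choose i) • f (m + s - i) (k + s) := by
  rw [eq_fwdDiff_iter_of_pascal hf s, fwdDiff_iter_eq_sum_shift, ← sum_range_reflect]
  refine sum_congr rfl fun i hi => ?_
  have hi : i ≤ s := Nat.lt_succ_iff.mp (mem_range.mp hi)
  rw [Nat.add_sub_cancel, Nat.sub_sub_self hi, Nat.choose_symm hi, smul_eq_mul, mul_one,
    Nat.add_sub_assoc hi]

end Pascal

theorem stmt_8_general (s : ℕ) (n : ℕ) (k m : ℕ) (p : Fin n → ℕ) :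
    (F n p m k : ℤ) =
      ∑ i ∈ Finset.range (s + 1), (-1 : ℤ) ^ i * (s.choose i : ℤ) *
        (F n p (m + s - i) (k + s) : ℤ) := by
  simpa only [smul_eq_mul] using eq_alternating_sum_of_pascal (f := fun m k => (F n p m k : ℤ))
    (fun m k => by push_cast [F_succ_succ]; rfl) s m k

theorem stmt_8 (s : ℕ) (hs : 1 ≤ s) (n : ℕ) (hn : 1 ≤ n) (k m : ℕ)
    (p : Fin n → ℕ) (hp : ∀ i, 1 ≤ p i) :
    (F n p m k : ℤ) =
      ∑ i ∈ Finset.range (s + 1), (-1 : ℤ) ^ i * (s.choose i : ℤ) *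
        (F n p (m + s - i) (k + s) : ℤ) :=
  stmt_8_general s n k m p
end

section
/- Let c(n,k,m) = F(n,k,P,m) where all n main blocks have exactly two elements (p_1 = ... = p_n = 2). Then for all n ≥ 2, k ≥ 0, m ≥ 0, c(n,k,m) = 2·c(n-1,k,m) + c(n-1,k-1,m), where c(n-1,-1,m) = 0. -/
/-- The inset-counting function with an integer parameter `k`, equal to `0`
when `k < 0` (the paper's convention `F(n,k,P,m) = 0` for `k < 0`). -/
def Fz (n : ℕ) (p : Fin n → ℕ) (m : ℕ) (k : ℤ) : ℕ :=
  if 0 ≤ k then F n p m k.toNat else 0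

/-- `c n k m` is the number of `(n+k)`-insets when every main block has
exactly two elements, with the convention that it vanishes for `k < 0`. -/
def c (n : ℕ) (k : ℤ) (m : ℕ) : ℕ :=
  Fz n (fun _ => 2) m k

/-! Split an inset of `n + 1` blocks of size `q` into its trace `V` on the first `n` blocks and
the extra block, and its trace `W` on the last block. Then `V` is an inset of `n` blocks, `W` is an
arbitrary nonempty subset of the last block, and the two are independent; so the number of
size-`s` insets is `∑_{j=1}^{q} C(q, j) · I(n, s - j)`, where `I(n, t)` counts size-`t` insets of
`n` blocks. For `q = 2` this reads `2 · I(n, s - 1) + I(n, s - 2)`. -/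

open Finset

section SumDecomposition

variable {α β : Type*} [Fintype α] [Fintype β]

theorem card_filter_toLeft_toRight (R : ℕ → Prop) (P : Finset α → Prop) (Q : Finset β → Prop)
    [DecidablePred R] [DecidablePred P] [DecidablePred Q] [DecidableEq β] :
    #{U : Finset (α ⊕ β) | R #U ∧ P U.toLeft ∧ Q U.toRight} =
      ∑ W with Q W, #{V : Finset α | R (#V + #W) ∧ P V} := by
  rw [card_eq_sum_card_fiberwise (f := toRight) (t := {W | Q W})
    (fun U hU => by simp_all)]
  refine sum_congr rfl fun W _ => card_nbij' toLeft (·.disjSum W) ?_ ?_ ?_ ?_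
  · intro U hU
    simp only [coe_filter, mem_filter, mem_univ, true_and, Set.mem_ofPred] at hU ⊢
    obtain ⟨⟨hR, hP, -⟩, rfl⟩ := hU
    exact ⟨by rwa [card_toLeft_add_card_toRight], hP⟩
  · intro V hV
    simp_all [card_disjSum]
  · intro U hU
    simp only [coe_filter, mem_filter, Set.mem_ofPred] at hU
    rw [← hU.2]
    exact toLeft_disjSum_toRight
  · intro V _
    exact toLeft_disjSum

theorem sum_filter_nonempty_apply_card {M : Type*} [AddCommMonoid M] (g : ℕ → M) :
    ∑ W : Finset β with W.Nonempty, g #W =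
      ∑ j ∈ Icc 1 (Fintype.card β), (Fintype.card β).choose j • g j := by
  set g' : ℕ → M := fun j => if j = 0 then 0 else g j
  calc ∑ W : Finset β with W.Nonempty, g #W = ∑ W : Finset β, g' #W := by
        rw [sum_filter]
        refine sum_congr rfl fun W _ => ?_
        rcases W.eq_empty_or_nonempty with rfl | hW
        · simp [g']
        · simp [g', hW, hW.ne_empty]
    _ = ∑ j ∈ range (Fintype.card β + 1), (Fintype.card β).choose j • g' j := by
        rw [← powerset_univ, sum_powerset_apply_card, card_univ]
    _ = ∑ j ∈ Icc 1 (Fintype.card β), (Fintype.card β).choose j • g j := by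
        rw [sum_range_succ', ← Ico_add_one_right_eq_Icc, sum_Ico_eq_sum_range]
        simp [g', add_comm]

end SumDecomposition

section UniformBlocks

abbrev UniformGround (n q m : ℕ) : Type := InsetGround n (fun _ => q) m

def IsInset {n q m : ℕ} (U : Finset (UniformGround n q m)) : Prop :=
  ∀ i, ∃ a : Fin q, Sum.inl ⟨i, a⟩ ∈ U

instance {n q m : ℕ} : DecidablePred (IsInset (n := n) (q := q) (m := m)) :=
  fun _ => inferInstanceAs (Decidable (∀ _, _))

-- An integer size makes the paper's convention `F(n,k,P,m) = 0` for `k < 0` automatic.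
def insetCount (n q m : ℕ) (s : ℤ) : ℕ :=
  #{U : Finset (UniformGround n q m) | (#U : ℤ) = s ∧ IsInset U}

variable {n q m : ℕ}

theorem IsInset.le_card {U : Finset (UniformGround n q m)} (hU : IsInset U) : n ≤ #U := by
  have hfst : (univ : Finset (Fin n)) ⊆ U.toLeft.image Sigma.fst := fun i _ => by
    obtain ⟨a, ha⟩ := hU i
    exact mem_image.mpr ⟨⟨i, a⟩, mem_toLeft.mpr ha, rfl⟩
  calc n = #(univ : Finset (Fin n)) := (card_fin n).symm
    _ ≤ #(U.toLeft.image Sigma.fst) := card_le_card hfst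
    _ ≤ #U.toLeft := card_image_le
    _ ≤ #U := card_toLeft_le

theorem insetCount_eq_zero_of_lt {s : ℤ} (hs : s < n) : insetCount n q m s = 0 := by
  refine card_eq_zero.mpr (filter_eq_empty_iff.mpr fun U _ ⟨hcard, hU⟩ => ?_)
  have := hU.le_card
  omega

theorem Fz_const_eq_insetCount (k : ℤ) : Fz n (fun _ => q) m k = insetCount n q m (n + k) := by
  unfold Fz
  split_ifs with hk
  · unfold F insetCount IsInset
    congr 1
    refine filter_congr fun U _ => and_congr (by omega) (forall_congr' fun i => ?_)
    exact ⟨fun ⟨⟨j, a⟩, hj, ha⟩ => ⟨a, hj ▸ ha⟩, fun ⟨a, ha⟩ => ⟨⟨i, a⟩, rfl, ha⟩⟩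
  · exact (insetCount_eq_zero_of_lt (by omega)).symm

def lastBlockEquiv (n q m : ℕ) : UniformGround n q m ⊕ Fin q ≃ UniformGround (n + 1) q m where
  toFun
    | .inl (.inl x) => .inl ⟨x.1.castSucc, x.2⟩
    | .inl (.inr u) => .inr u
    | .inr a => .inl ⟨Fin.last n, a⟩
  invFun
    | .inl x => Fin.lastCases (.inr x.2) (fun i => .inl (.inl ⟨i, x.2⟩)) x.1
    | .inr u => .inl (.inr u)
  left_inv := by rintro ((x | u) | a) <;> simp
  right_inv := by
    rintro (⟨i, a⟩ | u)
    · induction i using Fin.lastCases <;> simp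
    · rfl

theorem isInset_map_lastBlockEquiv (U : Finset (UniformGround n q m ⊕ Fin q)) :
    IsInset (U.map (lastBlockEquiv n q m).toEmbedding) ↔ IsInset U.toLeft ∧ U.toRight.Nonempty := by
  simp [IsInset, Fin.forall_fin_succ', mem_map_equiv, lastBlockEquiv, Finset.Nonempty]

theorem insetCount_succ (n q m : ℕ) (s : ℤ) :
    insetCount (n + 1) q m s = ∑ j ∈ Icc 1 q, q.choose j * insetCount n q m (s - j) := by
  let e := (lastBlockEquiv n q m).finsetCongr
  have hsplit : insetCount (n + 1) q m s =
      #{U : Finset (UniformGround n q m ⊕ Fin q) |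
        (#U : ℤ) = s ∧ IsInset U.toLeft ∧ U.toRight.Nonempty} := by
    refine (card_equiv e fun U => ?_).symm
    simp [e, Equiv.finsetCongr_apply, isInset_map_lastBlockEquiv]
  rw [hsplit, card_filter_toLeft_toRight (fun t : ℕ => (t : ℤ) = s),
    sum_filter_nonempty_apply_card (fun j => #{V | ((#V + j : ℕ) : ℤ) = s ∧ IsInset V}),
    Fintype.card_fin]
  refine sum_congr rfl fun j _ => ?_
  rw [smul_eq_mul, insetCount]
  congr 2
  exact filter_congr fun V _ => and_congr_left' (by omega)

theorem insetCount_succ_two (n m : ℕ) (s : ℤ) :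
    insetCount (n + 1) 2 m s = 2 * insetCount n 2 m (s - 1) + insetCount n 2 m (s - 2) := by
  simp [insetCount_succ, sum_Icc_succ_top]

end UniformBlocks

theorem stmt_11_general (n : ℕ) (hn : 2 ≤ n) (k : ℤ) (m : ℕ) :
    c n k m = 2 * c (n - 1) k m + c (n - 1) (k - 1) m := by
  obtain ⟨n, rfl⟩ : ∃ n', n = n' + 1 := ⟨n - 1, by omega⟩
  simp only [c, Fz_const_eq_insetCount, insetCount_succ_two, Nat.add_sub_cancel, Nat.cast_succ]
  rw [show (n + 1 + k - 1 : ℤ) = n + k by ring, show (n + 1 + k - 2 : ℤ) = n + (k - 1) by ring]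

theorem stmt_11 (n : ℕ) (hn : 2 ≤ n) (k : ℤ) (hk : 0 ≤ k) (m : ℕ) :
    c n k m = 2 * c (n - 1) k m + c (n - 1) (k - 1) m :=
  stmt_11_general n hn k m
end
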